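/- (Claim 3) Let n ≥ 2, let α ∈ ℝⁿ have strictly decreasing coordinates (α₁ > α₂ > ⋯ > αₙ), and let A be an n×n real matrix with all entries positive such that A *ᵥ (P *ᵥ α) ∼ A *ᵥ α for every n×n permutation matrix P. If some row of A is constant (all its entries equal), then every row of A is constant, i.e. there exist λ₁, …, λₙ ∈ ℝ with A i j = λᵢ for all i, j. -/

import Mathlib

open Matrix BigOperators

/-- A matrix is doubly stochastic: nonnegative entries, row sums and column sums all 1. -/
def IsDoublyStochastic {n : ℕ} (A : Matrix (Fin n) (Fin n) ℝ) : Prop :=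
  (∀ i j, 0 ≤ A i j) ∧ (∀ i, ∑ j, A i j = 1) ∧ (∀ j, ∑ i, A i j = 1)

/-- `Maj x y` means `x ≺ y`: `x` is majorized by `y`. -/
def Maj {n : ℕ} (x y : Fin n → ℝ) : Prop :=
  ∃ A : Matrix (Fin n) (Fin n) ℝ, IsDoublyStochastic A ∧ x = A *ᵥ y

/-- `MajEq x y` means `x ∼ y`: mutual majorization. -/
def MajEq {n : ℕ} (x y : Fin n → ℝ) : Prop := Maj x y ∧ Maj y x

/-- `P` is a permutation matrix. -/
def IsPermMatrix {n : ℕ} (P : Matrix (Fin n) (Fin n) ℝ) : Prop :=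
  ∃ σ : Equiv.Perm (Fin n), P = σ.permMatrix ℝ

/-- The increasing rearrangement `x↑` of a vector. -/
noncomputable def incSort {n : ℕ} (x : Fin n → ℝ) : Fin n → ℝ := x ∘ Tuple.sort x

/-- The decreasing rearrangement `x↓` of a vector. -/
noncomputable def decSort {n : ℕ} (x : Fin n → ℝ) : Fin n → ℝ :=
  fun i => (x ∘ Tuple.sort x) i.rev

/-!
Mutual majorization makes `x` and `y` rearrangements of each other: equality in
`∑ (B y)ᵢ² ≤ ∑ yⱼ²` forces every positive weight of the doubly stochastic `B` to join equal entries.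
A constant row of `A` takes the same value on every rearrangement `α ∘ σ`, so the values of the
nonconstant rows on `α ∘ σ` form a set independent of `σ`, with a maximum independent of `σ`.
For every `σ`, some nonconstant row attains that maximum, and then no swap can increase it,
i.e. that row read along `σ⁻¹` is antitone. A nonconstant row is antitone along at most
`n! / n` permutations, and fewer than `n` rows are nonconstant: too few to cover all `n!`.
-/

open Finset
open scoped Nat

namespace IsDoublyStochastic

variable {n : ℕ} {B : Matrix (Fin n) (Fin n) ℝ}

theorem sum_sq_sub_sum_sq_mulVec (hB : IsDoublyStochastic B) (y : Fin n → ℝ) :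
    ∑ j, y j ^ 2 - ∑ i, (B *ᵥ y) i ^ 2 = ∑ i, ∑ j, B i j * (y j - (B *ᵥ y) i) ^ 2 := by
  have hrow (i : Fin n) :
      ∑ j, B i j * (y j - (B *ᵥ y) i) ^ 2 = ∑ j, B i j * y j ^ 2 - (B *ᵥ y) i ^ 2 := by
    have hcross : ∑ j, B i j * (2 * y j * (B *ᵥ y) i) = 2 * (B *ᵥ y) i ^ 2 := calc
      _ = 2 * (B *ᵥ y) i * ∑ j, B i j * y j := by
        rw [mul_sum]; exact sum_congr rfl fun j _ => by ring
      _ = 2 * (B *ᵥ y) i ^ 2 := by rw [sq, ← mul_assoc]; rfl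
    simp only [sub_sq, mul_add, mul_sub, sum_add_distrib, sum_sub_distrib]
    rw [← sum_mul, hB.2.1 i, hcross]
    ring
  rw [sum_congr rfl fun i _ => hrow i, sum_sub_distrib, sum_comm]
  simp only [← sum_mul, hB.2.2, one_mul]

theorem sum_sq_mulVec_le (hB : IsDoublyStochastic B) (y : Fin n → ℝ) :
    ∑ i, (B *ᵥ y) i ^ 2 ≤ ∑ j, y j ^ 2 := by
  have hnonneg : 0 ≤ ∑ i, ∑ j, B i j * (y j - (B *ᵥ y) i) ^ 2 :=
    sum_nonneg fun i _ => sum_nonneg fun j _ => mul_nonneg (hB.1 i j) (sq_nonneg _)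
  linarith [hB.sum_sq_sub_sum_sq_mulVec y]

theorem mulVec_apply_eq_of_sum_sq_le (hB : IsDoublyStochastic B) {y : Fin n → ℝ}
    (h : ∑ j, y j ^ 2 ≤ ∑ i, (B *ᵥ y) i ^ 2) {i j : Fin n} (hij : B i j ≠ 0) :
    (B *ᵥ y) i = y j := by
  have hnonneg : ∀ i j, 0 ≤ B i j * (y j - (B *ᵥ y) i) ^ 2 :=
    fun i j => mul_nonneg (hB.1 i j) (sq_nonneg _)
  have hzero : ∑ i, ∑ j, B i j * (y j - (B *ᵥ y) i) ^ 2 = 0 :=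
    le_antisymm (by linarith [hB.sum_sq_sub_sum_sq_mulVec y])
      (sum_nonneg fun i _ => sum_nonneg fun j _ => hnonneg i j)
  rw [Fintype.sum_eq_zero_iff_of_nonneg fun i => sum_nonneg fun j _ => hnonneg i j] at hzero
  have hrow := (Fintype.sum_eq_zero_iff_of_nonneg (hnonneg i)).1 (congrFun hzero i)
  have hsq := (mul_eq_zero.1 (congrFun hrow j)).resolve_left hij
  exact (sub_eq_zero.1 (pow_eq_zero_iff two_ne_zero |>.1 hsq)).symm

theorem card_filter_le (hB : IsDoublyStochastic B) {x y : Fin n → ℝ}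
    (hxy : ∀ i j, B i j ≠ 0 → x i = y j) (v : ℝ) : #{i | x i = v} ≤ #{j | y j = v} := by
  have : (#{i | x i = v} : ℝ) ≤ #{j | y j = v} := calc
    (#{i | x i = v} : ℝ) = ∑ i ∈ {i | x i = v}, ∑ j ∈ {j | y j = v}, B i j := by
      rw [card_eq_sum_ones, Nat.cast_sum]
      refine sum_congr rfl fun i hi => ?_
      rw [Nat.cast_one, ← hB.2.1 i]
      refine (sum_subset (subset_univ _) fun j _ hj => ?_).symm
      by_contra hne
      exact hj (mem_filter.2 ⟨mem_univ _, hxy i j hne ▸ (mem_filter.1 hi).2⟩)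
    _ ≤ ∑ i, ∑ j ∈ {j | y j = v}, B i j :=
      sum_le_sum_of_subset_of_nonneg (subset_univ _) fun i _ _ => sum_nonneg fun j _ => hB.1 i j
    _ = #{j | y j = v} := by
      rw [card_eq_sum_ones, Nat.cast_sum]
      exact sum_comm.trans (sum_congr rfl fun j _ => by rw [hB.2.2 j, Nat.cast_one])
  exact_mod_cast this

end IsDoublyStochastic

section Majorization

variable {n : ℕ} {x y : Fin n → ℝ}

theorem Maj.sum_sq_le (h : Maj x y) : ∑ i, x i ^ 2 ≤ ∑ i, y i ^ 2 := by
  obtain ⟨B, hB, rfl⟩ := h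
  exact hB.sum_sq_mulVec_le y

theorem Maj.card_filter_le_of_sum_sq_le (h : Maj x y) (hsq : ∑ i, y i ^ 2 ≤ ∑ i, x i ^ 2)
    (v : ℝ) : #{i | x i = v} ≤ #{i | y i = v} := by
  obtain ⟨B, hB, rfl⟩ := h
  exact hB.card_filter_le (fun _ _ => hB.mulVec_apply_eq_of_sum_sq_le hsq) v

theorem MajEq.map_univ_val_eq (h : MajEq x y) : univ.val.map x = univ.val.map y := by
  obtain ⟨hxy, hyx⟩ := h
  refine Multiset.ext.2 fun v => ?_
  have := le_antisymm (hxy.card_filter_le_of_sum_sq_le hyx.sum_sq_le v)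
    (hyx.card_filter_le_of_sum_sq_le hxy.sum_sq_le v)
  rw [Multiset.count_map, Multiset.count_map]
  simpa only [Finset.card_def, Finset.filter_val, eq_comm] using this

end Majorization

theorem Finset.image_compl_eq_of_map_univ_val_eq {ι β : Type*} [Fintype ι] [DecidableEq ι]
    [DecidableEq β] {x y : ι → β} {s : Finset ι} (h : univ.val.map x = univ.val.map y)
    (hs : ∀ i ∈ s, x i = y i) : sᶜ.image x = sᶜ.image y := by
  have huniv : (univ : Finset ι).val = s.val + sᶜ.val := by
    rw [← union_compl s, ← disjUnion_eq_union s sᶜ disjoint_compl_right]; rfl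
  rw [huniv, Multiset.map_add, Multiset.map_add, Multiset.map_congr rfl hs] at h
  exact congrArg Multiset.toFinset (add_left_cancel h)

theorem Matrix.dotProduct_comp_perm_of_forall_eq {ι R : Type*} [Fintype ι]
    [NonUnitalNonAssocSemiring R] {a : ι → R} (ha : ∀ j j', a j = a j') (f : ι → R)
    (σ : Equiv.Perm ι) :
    a ⬝ᵥ (f ∘ σ) = a ⬝ᵥ f := by
  rw [← comp_equiv_symm_dotProduct]
  exact congrArg (· ⬝ᵥ f) (funext fun j => ha _ _)

theorem Matrix.dotProduct_comp_swap {ι R : Type*} [Fintype ι] [DecidableEq ι] [CommRing R]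
    (a f : ι → R) (p q : ι) :
    a ⬝ᵥ (f ∘ Equiv.swap p q) = a ⬝ᵥ f + (a p - a q) * (f q - f p) := by
  rcases eq_or_ne p q with rfl | hpq
  · simp
  rw [← sub_eq_iff_eq_add', dotProduct, dotProduct, ← sum_sub_distrib,
    Fintype.sum_eq_add p q hpq fun j hj => by simp [Equiv.swap_apply_of_ne_of_ne hj.1 hj.2]]
  simp only [Function.comp_apply, Equiv.swap_apply_left, Equiv.swap_apply_right]
  ring

theorem antitone_comp_symm_of_forall_dotProduct_le {n : ℕ} {α a : Fin n → ℝ}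
    (hα : StrictAnti α) {σ : Equiv.Perm (Fin n)}
    (hmax : ∀ τ : Equiv.Perm (Fin n), a ⬝ᵥ (α ∘ τ) ≤ a ⬝ᵥ (α ∘ σ)) :
    Antitone (a ∘ σ.symm) := by
  intro x y hxy
  by_contra! h
  have hlt : x < y := hxy.lt_of_ne (by rintro rfl; exact h.false)
  have := hmax (σ * Equiv.swap (σ.symm x) (σ.symm y))
  rw [Equiv.Perm.coe_mul, ← Function.comp_assoc, dotProduct_comp_swap] at this
  simp only [Function.comp_apply, Equiv.apply_symm_apply] at this h
  nlinarith [hα hlt]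

theorem Nat.le_choose_of_pos_of_lt : ∀ {n k : ℕ}, 0 < k → k < n → n ≤ n.choose k
  | n + 1, 1, _, _ => by simp
  | n + 1, k + 2, _, hk => by
    rw [Nat.choose_succ_succ']
    have := Nat.le_choose_of_pos_of_lt (by omega : 0 < k + 1) (by omega : k + 1 < n)
    have := Nat.choose_pos (by omega : k + 1 + 1 ≤ n)
    omega

theorem Equiv.Perm.card_mul_card_comp_eq_self_le_factorial {α : Type*} [Fintype α]
    [DecidableEq α] (f : α → Bool) {p q : α} (hpq : f p ≠ f q) :
    Fintype.card α * Fintype.card {g : Perm α // f ∘ g = f} ≤ (Fintype.card α)! := by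
  set k := Fintype.card {a // f a = true}
  set m := Fintype.card {a // f a = false}
  have hsum : k + m = Fintype.card α := by
    simpa using Fintype.card_congr (Equiv.sumCompl fun a => f a = true)
  obtain ⟨t, ht, u, hu⟩ : ∃ t, f t = true ∧ ∃ u, f u = false := by
    cases hp : f p
    · exact ⟨q, by simpa [hp] using hpq.symm, p, hp⟩
    · exact ⟨p, hp, q, by simpa [hp] using hpq.symm⟩
  have hk : 0 < k := Fintype.card_pos_iff.2 ⟨⟨t, ht⟩⟩
  have hm : 0 < m := Fintype.card_pos_iff.2 ⟨⟨u, hu⟩⟩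
  rw [DomMulAct.stabilizer_card, Fintype.prod_bool, ← hsum,
    ← Nat.choose_mul_factorial_mul_factorial (Nat.le_add_right k m), Nat.add_sub_cancel_left,
    mul_assoc]
  exact Nat.mul_le_mul_right _ (Nat.le_choose_of_pos_of_lt hk (by omega))

open scoped Classical in
theorem card_mul_card_antitone_comp_symm_le_factorial {β : Type*} [PartialOrder β] {n : ℕ}
    (a : Fin n → β) {p q : Fin n} (hpq : a p ≠ a q) :
    n * #{σ : Equiv.Perm (Fin n) | Antitone (a ∘ σ.symm)} ≤ n ! := by
  rcases (univ.filter fun σ : Equiv.Perm (Fin n) => Antitone (a ∘ σ.symm)).eq_empty_or_nonempty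
    with h | ⟨σ₀, hσ₀⟩
  · simp [h]
  -- Antitone rearrangements of `a` are unique, so `σ ↦ σ⁻¹ * σ₀` maps the permutations
  -- counted injectively into the stabilizer of `a`.
  set f : Fin n → Bool := fun j => decide (a j = a p)
  have hf : f p ≠ f q := by simp [f, hpq.symm]
  have hstab : ∀ σ ∈ univ.filter fun σ : Equiv.Perm (Fin n) => Antitone (a ∘ σ.symm),
      σ⁻¹ * σ₀ ∈ univ.filter fun g : Equiv.Perm (Fin n) => f ∘ g = f := by
    intro σ hσ
    have := Tuple.unique_antitone (mem_filter.1 hσ).2 (mem_filter.1 hσ₀).2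
    simp only [mem_filter, mem_univ, true_and]
    funext j
    have hj : a (σ.symm (σ₀ j)) = a j := by simpa using congrFun this (σ₀ j)
    simp [f, hj]
  calc n * #{σ : Equiv.Perm (Fin n) | Antitone (a ∘ σ.symm)}
      ≤ n * Fintype.card {g : Equiv.Perm (Fin n) // f ∘ g = f} := by
        rw [Fintype.card_subtype]
        exact Nat.mul_le_mul_left _
          (card_le_card_of_injOn _ hstab fun σ _ τ _ h => by simpa using h)
    _ ≤ n ! := by
        simpa using Equiv.Perm.card_mul_card_comp_eq_self_le_factorial f hf

open scoped Classical in
theorem exists_perm_forall_not_antitone_comp_symm {ι β : Type*} [PartialOrder β] {n : ℕ}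
    (a : ι → Fin n → β) {s : Finset ι} (hs : #s < n) (ha : ∀ i ∈ s, ∃ p q, a i p ≠ a i q) :
    ∃ σ : Equiv.Perm (Fin n), ∀ i ∈ s, ¬ Antitone (a i ∘ σ.symm) := by
  by_contra! h
  have hcover : (univ : Finset (Equiv.Perm (Fin n))) ⊆
      s.biUnion fun i => {σ | Antitone (a i ∘ σ.symm)} := fun σ _ => by simpa using h σ
  have : n * n ! ≤ #s * n ! := calc
    n * n ! = n * #(univ : Finset (Equiv.Perm (Fin n))) := by simp [Fintype.card_perm]
    _ ≤ n * ∑ i ∈ s, #{σ : Equiv.Perm (Fin n) | Antitone (a i ∘ σ.symm)} :=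
      Nat.mul_le_mul_left _ ((card_le_card hcover).trans card_biUnion_le)
    _ = ∑ i ∈ s, n * #{σ : Equiv.Perm (Fin n) | Antitone (a i ∘ σ.symm)} := mul_sum ..
    _ ≤ ∑ _i ∈ s, n ! := sum_le_sum fun i hi =>
      let ⟨_, _, hpq⟩ := ha i hi
      card_mul_card_antitone_comp_symm_le_factorial (a i) hpq
    _ = #s * n ! := by rw [sum_const, smul_eq_mul]
  exact (Nat.le_of_mul_le_mul_right this n.factorial_pos).not_gt hs

theorem allRows_constant_of_some_row_constant_general {n : ℕ} (α : Fin n → ℝ)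
    (hα : StrictAnti α) (A : Matrix (Fin n) (Fin n) ℝ)
    (hA : ∀ P : Matrix (Fin n) (Fin n) ℝ, IsPermMatrix P →
      MajEq (A *ᵥ (P *ᵥ α)) (A *ᵥ α))
    (hm : ∃ m : Fin n, ∀ j j' : Fin n, A m j = A m j') :
    ∃ lam : Fin n → ℝ, ∀ i j : Fin n, A i j = lam i := by
  obtain ⟨m, hm⟩ := hm
  refine ⟨fun i => A i m, fun i₀ j₀ => ?_⟩
  by_contra hij
  set C : Finset (Fin n) := {i | ∀ j j', A i j = A i j'}
  have hC : ∀ i ∈ Cᶜ, ∃ p q, A i p ≠ A i q := fun i hi => by simpa [C] using hi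
  have himage (σ : Equiv.Perm (Fin n)) : Cᶜ.image (A *ᵥ (α ∘ σ)) = Cᶜ.image (A *ᵥ α) := by
    refine image_compl_eq_of_map_univ_val_eq ?_ fun i hi => ?_
    · simpa [permMatrix_mulVec] using (hA _ ⟨σ, rfl⟩).map_univ_val_eq
    · exact dotProduct_comp_perm_of_forall_eq (mem_filter.1 hi).2 α σ
  have hcard : #Cᶜ < n := by
    rw [card_compl, Fintype.card_fin]
    exact Nat.sub_lt (Fin.pos m) (card_pos.2 ⟨m, mem_filter.2 ⟨mem_univ _, hm⟩⟩)
  obtain ⟨σ, hσ⟩ := exists_perm_forall_not_antitone_comp_symm A hcard hC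
  obtain ⟨i, hi, himax⟩ := Cᶜ.exists_max_image (A *ᵥ (α ∘ σ))
    ⟨i₀, by simpa [C] using ⟨j₀, m, hij⟩⟩
  refine hσ i hi (antitone_comp_symm_of_forall_dotProduct_le hα fun τ => ?_)
  obtain ⟨k, hk, hki⟩ := mem_image.1 (himage σ ▸ himage τ ▸ mem_image_of_mem (A *ᵥ (α ∘ τ)) hi)
  exact hki.symm.trans_le (himax k hk)

/-- Claim 3: if some row of `A` is constant, then every row of `A`
is constant. -/
theorem allRows_constant_of_some_row_constant {n : ℕ} (hn : 2 ≤ n) (α : Fin n → ℝ)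
    (hα : StrictAnti α) (A : Matrix (Fin n) (Fin n) ℝ) (hpos : ∀ i j, 0 < A i j)
    (hA : ∀ P : Matrix (Fin n) (Fin n) ℝ, IsPermMatrix P →
      MajEq (A *ᵥ (P *ᵥ α)) (A *ᵥ α))
    (hm : ∃ m : Fin n, ∀ j j' : Fin n, A m j = A m j') :
    ∃ lam : Fin n → ℝ, ∀ i j : Fin n, A i j = lam i :=
  allRows_constant_of_some_row_constant_general α hα A hA hm
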